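/- arXiv:1111.0801 — 2 statements merged into one kernel-verified Lean document; each statement's English description precedes it below -/
import Mathlib

section
/- Let n, m, d be positive integers with d ≤ n, m ≥ n, and suppose n is large enough that log(log n) ≥ 2 (natural logarithm). Let X be a binomial random variable with m trials and success probability d/n. Then P(X > (m·d/n)·log n) < 1/(e·n). -/
/-!
Chernoff bound with the exponential moment at `s = log log n`: Markov's inequality applied to
`exp (s X)` and `1 + x ≤ exp x` give `P(X > t) < exp (μ (e^s - 1) - s t)` for `μ = m d / n`.
With `e^s = log n`, `t = μ log n`, `μ ≥ 1` and `s ≥ 2` the exponent is at most `-(1 + log n)`.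
-/

open Finset Real

/-- `P(X > t)` for `X ~ Binomial(m, p)`, written as an explicit sum over the point masses. -/
noncomputable def binomialUpperTail (m : ℕ) (p t : ℝ) : ℝ :=
  ∑ k ∈ range (m + 1), if t < k then (m.choose k : ℝ) * p ^ k * (1 - p) ^ (m - k) else 0

theorem binomialUpperTail_le_mgf_mul_exp {m : ℕ} {p : ℝ} (hp0 : 0 ≤ p) (hp1 : p ≤ 1)
    {s : ℝ} (hs : 0 ≤ s) (t : ℝ) :
    binomialUpperTail m p t ≤ (p * exp s + (1 - p)) ^ m * exp (-(s * t)) := by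
  rw [add_pow, sum_mul]
  refine sum_le_sum fun k _ => ?_
  have hmass : 0 ≤ (m.choose k : ℝ) * p ^ k * (1 - p) ^ (m - k) := by
    have : 0 ≤ 1 - p := by linarith
    positivity
  have hweighted : (p * exp s) ^ k * (1 - p) ^ (m - k) * (m.choose k : ℝ) * exp (-(s * t))
      = (m.choose k : ℝ) * p ^ k * (1 - p) ^ (m - k) * exp (s * (k - t)) := by
    rw [mul_pow, ← exp_nat_mul, mul_sub, exp_sub, exp_neg, mul_comm (k : ℝ) s, div_eq_mul_inv]
    ring
  rw [hweighted]
  split_ifs with hk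
  · exact le_mul_of_one_le_right hmass (one_le_exp (mul_nonneg hs (by linarith)))
  · positivity

theorem binomialUpperTail_lt_exp {m : ℕ} (hm : m ≠ 0) {p : ℝ} (hp0 : 0 < p) (hp1 : p ≤ 1)
    {s : ℝ} (hs : 0 < s) (t : ℝ) :
    binomialUpperTail m p t < exp (m * p * (exp s - 1) - s * t) := by
  have hx : 0 < p * (exp s - 1) := mul_pos hp0 (by linarith [add_one_lt_exp hs.ne'])
  have hbase : p * exp s + (1 - p) < exp (p * (exp s - 1)) := by
    linarith [add_one_lt_exp hx.ne']
  calc binomialUpperTail m p t ≤ (p * exp s + (1 - p)) ^ m * exp (-(s * t)) :=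
        binomialUpperTail_le_mgf_mul_exp hp0.le hp1 hs.le t
    _ < exp (p * (exp s - 1)) ^ m * exp (-(s * t)) := by gcongr
    _ = exp (m * p * (exp s - 1) - s * t) := by
        rw [← exp_nat_mul, ← exp_add]
        ring_nf

/-- **High-probability part of Lemma 1.**
Let `n, m, d` be positive integers with `d ≤ n`, `m ≥ n`, and `n` large enough that
`log (log n) ≥ 2` (natural logarithm). If `X` is binomially distributed with `m` trials
and success probability `d/n`, then `P(X > (m·d/n)·log n) < 1/(e·n)`. -/
theorem stmt1 (n m d : ℕ) (hn : 0 < n) (hd : 0 < d) (hdn : d ≤ n) (hmn : n ≤ m)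
    (hlog : 2 ≤ Real.log (Real.log n)) :
    ∑ k ∈ Finset.range (m + 1),
        (if (m : ℝ) * d / n * Real.log n < (k : ℝ) then
          (m.choose k : ℝ) * ((d : ℝ) / n) ^ k * (1 - (d : ℝ) / n) ^ (m - k) else 0)
      < 1 / (Real.exp 1 * n) := by
  have hn' : (0 : ℝ) < n := by exact_mod_cast hn
  have hL : 1 < log n := by
    by_contra! h
    linarith [log_nonpos (log_nonneg (by exact_mod_cast hn : (1 : ℝ) ≤ n)) h]
  have hp0 : 0 < (d : ℝ) / n := by positivity
  have hp1 : (d : ℝ) / n ≤ 1 := (div_le_one hn').mpr (by exact_mod_cast hdn)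
  have hμ : 1 ≤ (m : ℝ) * (d / n) := by
    rw [← mul_div_assoc, one_le_div hn']
    exact_mod_cast hmn.trans (Nat.le_mul_of_pos_right m hd)
  have hexponent : m * (d / n) * (exp (log (log n)) - 1) - log (log n) * (m * d / n * log n)
      ≤ -1 - log n := by
    rw [exp_log (by linarith), mul_div_assoc]
    nlinarith [mul_le_mul_of_nonneg_right hlog (by positivity : 0 ≤ m * (d / n) * log n)]
  calc binomialUpperTail m (d / n) (m * d / n * log n)
      < exp (m * (d / n) * (exp (log (log n)) - 1) - log (log n) * (m * d / n * log n)) :=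
        binomialUpperTail_lt_exp (by omega) hp0 hp1 (by linarith) _
    _ ≤ exp (-1 - log n) := exp_le_exp.mpr hexponent
    _ = 1 / (exp 1 * n) := by
        rw [sub_eq_add_neg, exp_add, exp_neg, exp_neg, exp_log hn']
        field_simp
end

section
/- Let n, c, d, γ be natural numbers with n ≥ 2, d ≥ 1, γ ≥ 1 and c ≤ n, and let ε ∈ (0, 1] and φ > 0 be real numbers. If c ≤ n^{1−ε} (real power) and γ·d·ε ≥ φ, then (C(c, d) / C(n, d))^γ ≤ n^{−φ}, where the left-hand side is a real number computed from the binomial coefficients C(a,b) = 'a choose b'. -/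
/-!
Drawing `d` distinct bins out of `n`, the chance that all of them fall among `c ≤ n` given bins
is `∏_{i<d} (c - i)/(n - i) ≤ (c/n)^d`, and `c/n ≤ n^(-ε)`. Hence `γ` independent rounds all fail
with probability at most `n^(-γdε) ≤ n^(-φ)`.
-/

theorem Nat.descFactorial_mul_pow_le_descFactorial_mul_pow {c n : ℕ} (hc : c ≤ n) :
    ∀ d, c.descFactorial d * n ^ d ≤ n.descFactorial d * c ^ d
  | 0 => by simp
  | d + 1 => by
    have hstep : (c - d) * n ≤ (n - d) * c := by
      rw [Nat.sub_mul, Nat.sub_mul, Nat.mul_comm c n]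
      exact Nat.sub_le_sub_left (Nat.mul_le_mul_left d hc) (n * c)
    calc c.descFactorial (d + 1) * n ^ (d + 1)
        = (c - d) * n * (c.descFactorial d * n ^ d) := by rw [Nat.descFactorial_succ]; ring
      _ ≤ (n - d) * c * (n.descFactorial d * c ^ d) :=
          Nat.mul_le_mul hstep (descFactorial_mul_pow_le_descFactorial_mul_pow hc d)
      _ = n.descFactorial (d + 1) * c ^ (d + 1) := by rw [Nat.descFactorial_succ]; ring

theorem Nat.choose_mul_pow_le_choose_mul_pow {c n : ℕ} (hc : c ≤ n) (d : ℕ) :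
    c.choose d * n ^ d ≤ n.choose d * c ^ d := by
  have h := descFactorial_mul_pow_le_descFactorial_mul_pow hc d
  rw [descFactorial_eq_factorial_mul_choose, descFactorial_eq_factorial_mul_choose,
    Nat.mul_assoc, Nat.mul_assoc] at h
  exact Nat.le_of_mul_le_mul_left h d.factorial_pos

theorem Nat.choose_div_choose_le_div_pow {α : Type*} [Field α] [LinearOrder α]
    [IsStrictOrderedRing α] {c n : ℕ} (hc : c ≤ n) (d : ℕ) :
    (c.choose d : α) / n.choose d ≤ ((c : α) / n) ^ d := by
  rcases le_or_gt d n with hdn | hnd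
  · have hpos : (0 : α) < n.choose d := by exact_mod_cast choose_pos hdn
    rcases (Nat.zero_le n).eq_or_lt with rfl | hn
    · simp [Nat.le_zero.mp hdn]
    rw [div_pow, div_le_div_iff₀ hpos (by positivity), mul_comm _ (n.choose d : α)]
    exact_mod_cast choose_mul_pow_le_choose_mul_pow hc d
  · rw [choose_eq_zero_of_lt (hc.trans_lt hnd), Nat.cast_zero, zero_div]
    positivity

theorem Real.div_le_rpow_neg_of_le_rpow_one_sub {x y ε : ℝ} (hx : 0 < x)
    (hy : y ≤ x ^ (1 - ε)) : y / x ≤ x ^ (-ε) := by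
  rwa [div_le_iff₀ hx, ← Real.rpow_add_one hx.ne', neg_add_eq_sub]

theorem stmt8_general (n c d γ : ℕ) (hn : 2 ≤ n) (hc : c ≤ n)
    (ε φ : ℝ)
    (hcn : (c : ℝ) ≤ (n : ℝ) ^ ((1 : ℝ) - ε)) (hγdε : φ ≤ (γ : ℝ) * d * ε) :
    ((c.choose d : ℝ) / (n.choose d : ℝ)) ^ γ ≤ (n : ℝ) ^ (-φ) := by
  have hn1 : (1 : ℝ) ≤ n := by exact_mod_cast one_le_two.trans hn
  have hratio : (c : ℝ) / n ≤ (n : ℝ) ^ (-ε) :=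
    Real.div_le_rpow_neg_of_le_rpow_one_sub (zero_lt_one.trans_le hn1) hcn
  calc ((c.choose d : ℝ) / n.choose d) ^ γ
      ≤ (((n : ℝ) ^ (-ε)) ^ d) ^ γ := by
        gcongr
        exact (Nat.choose_div_choose_le_div_pow hc d).trans (by gcongr)
    _ = (n : ℝ) ^ (-(γ * d * ε)) := by
        rw [← pow_mul, ← Real.rpow_mul_natCast (by positivity)]
        push_cast
        ring_nf
    _ ≤ (n : ℝ) ^ (-φ) := Real.rpow_le_rpow_of_exponent_le hn1 (neg_le_neg hγdε)

/-- **Quantitative content of Lemma 5.**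
Let `n, c, d, γ` be naturals with `n ≥ 2`, `d ≥ 1`, `γ ≥ 1`, `c ≤ n`, and let
`ε ∈ (0,1]` and `φ > 0` be reals. If `c ≤ n^(1−ε)` (real power) and `γ·d·ε ≥ φ`, then
`(C(c,d)/C(n,d))^γ ≤ n^(−φ)` (as real numbers, the right-hand side a real power). -/
theorem stmt8 (n c d γ : ℕ) (hn : 2 ≤ n) (hd : 1 ≤ d) (hγ : 1 ≤ γ) (hc : c ≤ n)
    (ε φ : ℝ) (hε0 : 0 < ε) (hε1 : ε ≤ 1) (hφ : 0 < φ)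
    (hcn : (c : ℝ) ≤ (n : ℝ) ^ ((1 : ℝ) - ε)) (hγdε : φ ≤ (γ : ℝ) * d * ε) :
    ((c.choose d : ℝ) / (n.choose d : ℝ)) ^ γ ≤ (n : ℝ) ^ (-φ) :=
  stmt8_general n c d γ hn hc ε φ hcn hγdε
end
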